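/- arXiv:2402.11915 — 4 statements merged into one kernel-verified Lean document; each statement's English description precedes it below -/
import Mathlib

section
/- There exist absolute constants C > 0 and C' > 0 such that the following holds. Let n ≥ 2 and d ≥ 1 be integers, let ε > 0, and let q be a prime power such that the characteristic of 𝔽_q is at least d(d−1)+1 and q ≥ C·(d·2^d/ε + d^4/ε^2). Then there exist a nonempty finite set S with log₂|S| ≤ C'·(d·log₂ n + log₂ q) and a function G : S → 𝔽_q^{n+1} such that for every polynomial f ∈ 𝔽_q[x_1,…,x_n,y] of total degree at most d, (1/2)·Σ_{a∈𝔽_q} | Pr_{x ← uniform on 𝔽_q^{n+1}}[f(x)=a] − Pr_{s ← uniform on S}[f(G(s))=a] | ≤ ε. -/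
/-!
A uniformly random tuple of `N = q⁴ ((n + 2)ᵈ + 1)` points of `𝔽_q^{n+1}` fools all polynomials of
degree at most `d` simultaneously with positive probability. For a fixed polynomial `f` and value
`a`, the fraction of sample points with `f = a` misses `Pr[f = a]` by at least `t = ε / q` with
probability at most `2 exp (-N t² / 4)` (Chernoff). A monomial of degree at most `d` is a sum of
`d` monomials of degree at most one, so there are at most `q^{(n+2)ᵈ}` such polynomials, and the
union bound over all pairs `(f, a)` leaves a good tuple. Error `t` at every value gives
statistical distance at most `q t / 2 = ε / 2`, and `log₂ N ≤ 5 log₂ q + d log₂ n` because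
`q ≥ 2^{d+1}`. For `ε ≥ 1` a single point suffices.
-/

open MvPolynomial Finset Real
open scoped Pointwise

section Chernoff

variable {V : Type*} [Fintype V]

theorem sum_exp_mul_le_card_mul_exp_sq {h : V → ℝ} (hsum : ∑ x, h x = 0) (hh : ∀ x, |h x| ≤ 1)
    {l : ℝ} (hl0 : 0 ≤ l) (hl1 : l ≤ 1) :
    ∑ x, exp (l * h x) ≤ Fintype.card V * exp (l ^ 2) := by
  have hpoint : ∀ x, exp (l * h x) ≤ 1 + l * h x + l ^ 2 := fun x => by
    have hlh : |l * h x| ≤ l := by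
      rw [abs_mul, abs_of_nonneg hl0]; exact mul_le_of_le_one_right hl0 (hh x)
    have hquad := abs_le.1 (abs_exp_sub_one_sub_id_le (hlh.trans hl1))
    nlinarith [sq_abs (l * h x), abs_nonneg (l * h x)]
  calc ∑ x, exp (l * h x) ≤ ∑ x, (1 + l * h x + l ^ 2) := sum_le_sum fun x _ => hpoint x
    _ = Fintype.card V * (1 + l ^ 2) := by
      simp only [sum_add_distrib, ← mul_sum, hsum, sum_const, card_univ, nsmul_eq_mul]; ring
    _ ≤ Fintype.card V * exp (l ^ 2) := by gcongr; linarith [add_one_le_exp (l ^ 2)]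

theorem card_tuple_sum_ge_le {h : V → ℝ} (hsum : ∑ x, h x = 0) (hh : ∀ x, |h x| ≤ 1) (N : ℕ)
    {t : ℝ} (ht0 : 0 ≤ t) (ht2 : t ≤ 2) :
    (#{ω : Fin N → V | N * t ≤ ∑ i, h (ω i)} : ℝ) ≤
      Fintype.card V ^ N * exp (-(N * t ^ 2 / 4)) := by
  -- Markov's inequality for `exp (l * ∑ i, h (ω i))`; `l = t / 2` optimises the bound
  set l := t / 2 with hl
  calc (#{ω : Fin N → V | N * t ≤ ∑ i, h (ω i)} : ℝ)
      = ∑ ω : Fin N → V, if N * t ≤ ∑ i, h (ω i) then 1 else 0 := natCast_card_filter _ _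
    _ ≤ ∑ ω : Fin N → V, exp (l * (∑ i, h (ω i) - N * t)) := sum_le_sum fun ω _ => by
      split_ifs with hω
      · exact one_le_exp (mul_nonneg (by positivity) (by linarith))
      · exact (exp_pos _).le
    _ = exp (-(l * N * t)) * (∑ x, exp (l * h x)) ^ N := by
      rw [Fintype.sum_pow, mul_sum]
      refine sum_congr rfl fun ω _ => ?_
      rw [← exp_sum, ← exp_add]
      congr 1
      rw [← mul_sum]
      ring
    _ ≤ exp (-(l * N * t)) * (Fintype.card V * exp (l ^ 2)) ^ N := by
      gcongr
      exact sum_exp_mul_le_card_mul_exp_sq hsum hh (by positivity) (by linarith [hl])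
    _ = Fintype.card V ^ N * exp (-(N * t ^ 2 / 4)) := by
      rw [mul_pow, ← exp_nat_mul, mul_left_comm, ← exp_add]
      congr 2
      ring

theorem card_tuple_abs_sum_ge_le {h : V → ℝ} (hsum : ∑ x, h x = 0) (hh : ∀ x, |h x| ≤ 1) (N : ℕ)
    {t : ℝ} (ht0 : 0 ≤ t) (ht2 : t ≤ 2) :
    (#{ω : Fin N → V | N * t ≤ |∑ i, h (ω i)|} : ℝ) ≤
      2 * Fintype.card V ^ N * exp (-(N * t ^ 2 / 4)) := by
  have hpos := card_tuple_sum_ge_le hsum hh N ht0 ht2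
  have hneg := card_tuple_sum_ge_le (h := fun x => -h x) (by simp [hsum]) (by simpa using hh) N
    ht0 ht2
  simp only [sum_neg_distrib] at hneg
  classical
  calc (#{ω : Fin N → V | N * t ≤ |∑ i, h (ω i)|} : ℝ)
      ≤ #{ω : Fin N → V | N * t ≤ ∑ i, h (ω i)} + #{ω : Fin N → V | N * t ≤ -∑ i, h (ω i)} := by
        exact_mod_cast (card_le_card fun ω => by simp [le_abs]).trans (card_union_le _ _)
    _ ≤ _ := by linarith

theorem exists_tuple_forall_abs_sum_lt [Nonempty V] {ι : Type*} [Fintype ι] (h : ι → V → ℝ)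
    (hsum : ∀ j, ∑ x, h j x = 0) (hh : ∀ j x, |h j x| ≤ 1) (N : ℕ) {t : ℝ} (ht0 : 0 ≤ t)
    (ht2 : t ≤ 2) (hN : 2 * Fintype.card ι * exp (-(N * t ^ 2 / 4)) < 1) :
    ∃ ω : Fin N → V, ∀ j, |∑ i, h j (ω i)| < N * t := by
  classical
  by_contra! hbad
  have hcover : (univ : Finset (Fin N → V)) ⊆
      univ.biUnion fun j => {ω | N * t ≤ |∑ i, h j (ω i)|} := fun ω _ => by
    obtain ⟨j, hj⟩ := hbad ω
    simpa using ⟨j, hj⟩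
  have hpos : (0 : ℝ) < Fintype.card V ^ N := by positivity
  have : (Fintype.card V : ℝ) ^ N ≤
      Fintype.card ι * (2 * Fintype.card V ^ N * exp (-(N * t ^ 2 / 4))) := by
    calc (Fintype.card V : ℝ) ^ N = #(univ : Finset (Fin N → V)) := by simp
      _ ≤ ∑ j, (#{ω : Fin N → V | N * t ≤ |∑ i, h j (ω i)|} : ℝ) := by
        exact_mod_cast (card_le_card hcover).trans card_biUnion_le
      _ ≤ ∑ _j : ι, 2 * (Fintype.card V : ℝ) ^ N * exp (-(N * t ^ 2 / 4)) :=
        sum_le_sum fun j _ => card_tuple_abs_sum_ge_le (hsum j) (hh j) N ht0 ht2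
      _ = _ := by simp
  nlinarith

end Chernoff

section StatDist

variable {V S β : Type*} [Fintype β]

/-- The statistical distance between `f(U_V)` and `g(U_S)`. -/
noncomputable def statDist (f : V → β) (g : S → β) : ℝ :=
  1 / 2 * ∑ a, |(Nat.card {x // f x = a} : ℝ) / Nat.card V -
    (Nat.card {s // g s = a} : ℝ) / Nat.card S|

theorem sum_natCard_fiber [Finite V] (f : V → β) :
    ∑ a, Nat.card {x // f x = a} = Nat.card V := by
  rw [← Nat.card_sigma, Nat.card_congr (Equiv.sigmaFiberEquiv f)]

theorem sum_natCard_fiber_div_le_one [Finite V] (f : V → β) :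
    ∑ a, (Nat.card {x // f x = a} : ℝ) / Nat.card V ≤ 1 := by
  rw [← sum_div, ← Nat.cast_sum, sum_natCard_fiber]
  exact div_self_le_one _

theorem statDist_le_one [Finite V] [Finite S] (f : V → β) (g : S → β) : statDist f g ≤ 1 := by
  have hf := sum_natCard_fiber_div_le_one f
  have hg := sum_natCard_fiber_div_le_one g
  calc statDist f g
      ≤ 1 / 2 * ∑ a, ((Nat.card {x // f x = a} : ℝ) / Nat.card V +
        (Nat.card {s // g s = a} : ℝ) / Nat.card S) := by
        unfold statDist
        gcongr with a
        exact (abs_sub _ _).trans_eq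
          (by rw [abs_of_nonneg (by positivity), abs_of_nonneg (by positivity)])
    _ ≤ 1 := by rw [sum_add_distrib]; linarith

theorem statDist_le_of_forall_abs_sub_le {f : V → β} {g : S → β} {t : ℝ}
    (h : ∀ a, |(Nat.card {x // f x = a} : ℝ) / Nat.card V -
      (Nat.card {s // g s = a} : ℝ) / Nat.card S| ≤ t) :
    statDist f g ≤ Fintype.card β * t / 2 := by
  unfold statDist
  have := sum_le_card_nsmul univ _ t fun a _ => h a
  rw [card_univ, nsmul_eq_mul] at this
  linarith

end StatDist

theorem natCard_fiber_eq_sum_ite {W β : Type*} [Fintype W] [DecidableEq β] (g : W → β) (a : β) :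
    (Nat.card {x // g x = a} : ℝ) = ∑ x, if g x = a then 1 else 0 := by
  rw [sum_boole, Nat.card_eq_fintype_card, Fintype.card_subtype]

theorem sum_ite_sub_natCard_div_eq_zero {V β : Type*} [Fintype V] [Nonempty V] [DecidableEq β]
    (f : V → β) (a : β) :
    ∑ x, ((if f x = a then 1 else 0) - (Nat.card {y // f y = a} : ℝ) / Nat.card V) = 0 := by
  rw [sum_sub_distrib, ← natCard_fiber_eq_sum_ite, sum_const, card_univ, nsmul_eq_mul,
    ← Nat.card_eq_fintype_card, mul_div_cancel₀ _ (Nat.cast_ne_zero.2 Nat.card_pos.ne'), sub_self]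

theorem abs_ite_sub_natCard_div_le_one {V β : Type*} [Finite V] [DecidableEq β] (f : V → β)
    (a : β) (x : V) :
    |(if f x = a then 1 else 0) - (Nat.card {y // f y = a} : ℝ) / Nat.card V| ≤ 1 := by
  have hp0 : 0 ≤ (Nat.card {y // f y = a} : ℝ) / Nat.card V := by positivity
  have hp1 : (Nat.card {y // f y = a} : ℝ) / Nat.card V ≤ 1 :=
    div_le_one_of_le₀ (by exact_mod_cast Finite.card_subtype_le _) (Nat.cast_nonneg _)
  rw [abs_le]
  split_ifs <;> constructor <;> linarith

theorem exists_tuple_forall_statDist_comp_le {V β ι : Type*} [Fintype V] [Nonempty V]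
    [Fintype β] [Finite ι] (f : ι → V → β) (N : ℕ) {t : ℝ} (ht0 : 0 ≤ t) (ht2 : t ≤ 2)
    (hN : 2 * (Nat.card ι * Fintype.card β) * exp (-(N * t ^ 2 / 4)) < 1) :
    ∃ ω : Fin N → V, ∀ j, statDist (f j) (f j ∘ ω) ≤ Fintype.card β * t / 2 := by
  classical
  have := Fintype.ofFinite ι
  set p : ι → β → ℝ := fun j a => (Nat.card {x // f j x = a} : ℝ) / Nat.card V
  let h : ι × β → V → ℝ := fun ja x => (if f ja.1 x = ja.2 then 1 else 0) - p ja.1 ja.2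
  obtain ⟨ω, hω⟩ := exists_tuple_forall_abs_sum_lt h
    (fun ja => sum_ite_sub_natCard_div_eq_zero (f ja.1) ja.2)
    (fun ja => abs_ite_sub_natCard_div_le_one (f ja.1) ja.2) N ht0 ht2
    (by simpa [Nat.card_eq_fintype_card, mul_assoc] using hN)
  refine ⟨ω, fun j => statDist_le_of_forall_abs_sub_le fun a => ?_⟩
  have hemp : ∑ i, h (j, a) (ω i) = Nat.card {i // f j (ω i) = a} - N * p j a := by
    simp only [h, sum_sub_distrib, ← natCard_fiber_eq_sum_ite, sum_const, card_univ,
      Fintype.card_fin, nsmul_eq_mul]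
  have hbound := hω (j, a)
  have hNpos : (0 : ℝ) < N := pos_of_mul_pos_left ((abs_nonneg _).trans_lt hbound) ht0
  rw [hemp] at hbound
  rw [Nat.card_fin, abs_sub_comm]
  change |(Nat.card {i // f j (ω i) = a} : ℝ) / N - p j a| ≤ t
  rw [div_sub' hNpos.ne', abs_div, abs_of_pos hNpos, div_le_iff₀ hNpos]
  linarith

namespace Finsupp

variable (σ : Type*) [Fintype σ] [DecidableEq σ]

noncomputable def degreeLEOne : Finset (σ →₀ ℕ) := insert 0 (univ.image fun i => single i 1)

theorem card_degreeLEOne_le : #(degreeLEOne σ) ≤ Fintype.card σ + 1 :=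
  (card_insert_le _ _).trans (by gcongr; exact card_image_le)

variable {σ}

theorem mem_nsmul_degreeLEOne {d : ℕ} {m : σ →₀ ℕ} (hm : m.degree ≤ d) :
    m ∈ d • degreeLEOne σ := by
  induction d generalizing m with
  | zero => simp [(degree_eq_zero_iff m).1 (Nat.le_zero.1 hm)]
  | succ d ih =>
    rw [succ_nsmul, mem_add]
    by_cases hm0 : m = 0
    · subst hm0
      exact ⟨0, zero_mem_nsmul (mem_insert_self _ _), 0, mem_insert_self _ _, add_zero 0⟩
    obtain ⟨i, hi⟩ : ∃ i, m i ≠ 0 := by simpa [Finsupp.ext_iff] using hm0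
    have hsingle : single i 1 ≤ m := single_le_iff.2 (Nat.one_le_iff_ne_zero.2 hi)
    have hsplit : m - single i 1 + single i 1 = m := tsub_add_cancel_of_le hsingle
    refine ⟨m - single i 1, ih ?_, single i 1,
      mem_insert_of_mem (mem_image_of_mem _ (mem_univ i)), hsplit⟩
    have := congrArg degree hsplit
    rw [map_add, degree_single] at this
    omega

end Finsupp

namespace MvPolynomial

variable {σ R : Type*} [Fintype σ] [CommSemiring R] {d : ℕ}

theorem support_subset_nsmul_degreeLEOne [DecidableEq σ] {p : MvPolynomial σ R}
    (hp : p.totalDegree ≤ d) : p.support ⊆ d • Finsupp.degreeLEOne σ :=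
  fun _ hm => Finsupp.mem_nsmul_degreeLEOne ((le_totalDegree hm).trans hp)

theorem injective_coeff_of_totalDegree_le [DecidableEq σ] :
    Function.Injective fun (p : {p : MvPolynomial σ R // p.totalDegree ≤ d})
      (m : (d • Finsupp.degreeLEOne σ : Finset (σ →₀ ℕ))) => coeff m p.1 := by
  intro p p' hpp'
  ext m
  by_cases hm : m ∈ d • Finsupp.degreeLEOne σ
  · exact congrFun hpp' ⟨m, hm⟩
  · rw [notMem_support_iff.1 fun h => hm (support_subset_nsmul_degreeLEOne p.2 h),
      notMem_support_iff.1 fun h => hm (support_subset_nsmul_degreeLEOne p'.2 h)]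

instance [Finite R] : Finite {p : MvPolynomial σ R // p.totalDegree ≤ d} := by
  classical
  exact Finite.of_injective _ injective_coeff_of_totalDegree_le

theorem natCard_subtype_totalDegree_le [Fintype R] :
    Nat.card {p : MvPolynomial σ R // p.totalDegree ≤ d} ≤
      Fintype.card R ^ (Fintype.card σ + 1) ^ d := by
  classical
  calc Nat.card {p : MvPolynomial σ R // p.totalDegree ≤ d}
      ≤ Fintype.card R ^ #(d • Finsupp.degreeLEOne σ) := by
        simpa using Nat.card_le_card_of_injective _
          (injective_coeff_of_totalDegree_le (σ := σ) (R := R) (d := d))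
    _ ≤ Fintype.card R ^ (Fintype.card σ + 1) ^ d := by
        gcongr
        · exact Fintype.card_pos
        · exact card_nsmul_le.trans (Nat.pow_le_pow_left (Finsupp.card_degreeLEOne_le σ) d)

end MvPolynomial

theorem two_mul_lt_exp (x : ℝ) : 2 * x < exp x := by
  rcases le_or_gt x 0 with hx | hx
  · linarith [exp_pos x]
  · nlinarith [quadratic_le_exp_of_nonneg hx.le, sq_nonneg (x - 1)]

theorem two_mul_pow_succ_mul_exp_lt_one {q ε : ℝ} (hq : 0 < q) (hqε : 4 ≤ q * ε ^ 2) (B : ℕ) :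
    2 * (q ^ B * q) * exp (-(q ^ 4 * (B + 1) * (ε / q) ^ 2 / 4)) < 1 := by
  have hqexp : q * exp (-q) < 1 / 2 := by
    rw [exp_neg, ← div_eq_mul_inv, div_lt_iff₀ (exp_pos q)]
    linarith [two_mul_lt_exp q]
  have hexponent : -(q ^ 4 * (B + 1) * (ε / q) ^ 2 / 4) ≤ (B + 1 : ℕ) * -q := by
    have : q ^ 4 * (B + 1) * (ε / q) ^ 2 / 4 = q * (B + 1) * (q * ε ^ 2 / 4) := by
      field_simp
    rw [this]
    push_cast
    nlinarith [mul_pos hq (by positivity : (0 : ℝ) < B + 1)]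
  calc 2 * (q ^ B * q) * exp (-(q ^ 4 * (B + 1) * (ε / q) ^ 2 / 4))
      ≤ 2 * (q * exp (-q)) ^ (B + 1) := by
        rw [mul_pow, ← pow_succ, ← exp_nat_mul, mul_assoc]
        gcongr
    _ ≤ 2 * (q * exp (-q)) := by
        gcongr
        exact pow_le_of_le_one (by positivity) (by linarith) B.succ_ne_zero
    _ < 1 := by linarith

theorem two_pow_add_two_le {d : ℕ} {ε q : ℝ} (hε : 0 < ε) (hεd : ε ≤ d)
    (hq : 4 * (d * 2 ^ d / ε + d ^ 4 / ε ^ 2) ≤ q) : (2 : ℝ) ^ (d + 2) ≤ q := by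
  have : (2 : ℝ) ^ d ≤ d * 2 ^ d / ε := by
    rw [le_div_iff₀ hε, mul_comm]; gcongr
  have : (0 : ℝ) ≤ d ^ 4 / ε ^ 2 := by positivity
  rw [pow_add]
  linarith

theorem four_le_mul_sq {d : ℕ} {ε q : ℝ} (hε : 0 < ε) (hd : 1 ≤ d)
    (hq : 4 * (d * 2 ^ d / ε + d ^ 4 / ε ^ 2) ≤ q) : 4 ≤ q * ε ^ 2 := by
  have : 1 / ε ^ 2 ≤ d ^ 4 / ε ^ 2 := by
    gcongr
    exact one_le_pow₀ (by exact_mod_cast hd)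
  have : (0 : ℝ) ≤ d * 2 ^ d / ε := by positivity
  have : 4 * (1 / ε ^ 2) ≤ q := by linarith
  rwa [mul_one_div, div_le_iff₀ (by positivity)] at this

theorem logb_pow_four_mul_le {n d : ℕ} {q : ℝ} (hn : 2 ≤ n) (hq : 2 ^ (d + 1) ≤ q) :
    logb 2 (q ^ 4 * ((n + 2) ^ d + 1)) ≤ 5 * (d * logb 2 n + logb 2 q) := by
  have hn' : (2 : ℝ) ≤ n := by exact_mod_cast hn
  have hq1 : 1 ≤ q := le_trans (one_le_pow₀ one_le_two) hq
  have hsize : q ^ 4 * ((n + 2) ^ d + 1) ≤ q ^ 5 * n ^ d := by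
    have h1 : ((n : ℝ) + 2) ^ d ≤ 2 ^ d * n ^ d := by
      rw [← mul_pow]; gcongr; linarith
    have h2 : (1 : ℝ) ≤ 2 ^ d * n ^ d := one_le_mul_of_one_le_of_one_le
      (one_le_pow₀ one_le_two) (one_le_pow₀ (by linarith))
    calc q ^ 4 * ((n + 2) ^ d + 1) ≤ q ^ 4 * (2 * (2 ^ d * n ^ d)) := by gcongr; linarith
      _ = q ^ 4 * (2 ^ (d + 1) * n ^ d) := by ring
      _ ≤ q ^ 4 * (q * n ^ d) := by gcongr
      _ = q ^ 5 * n ^ d := by ring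
  have hlogn : 0 ≤ logb 2 n := logb_nonneg one_lt_two (by linarith)
  have hlogq : 0 ≤ logb 2 q := logb_nonneg one_lt_two hq1
  calc logb 2 (q ^ 4 * ((n + 2) ^ d + 1)) ≤ logb 2 (q ^ 5 * n ^ d) :=
        logb_le_logb_of_le one_lt_two (by positivity) hsize
    _ = 5 * logb 2 q + d * logb 2 n := by
        rw [logb_mul (by positivity) (by positivity), logb_pow, logb_pow]
        push_cast; ring
    _ ≤ 5 * (d * logb 2 n + logb 2 q) := by nlinarith [mul_nonneg (Nat.cast_nonneg d) hlogn]

/-- **Main theorem (PRG for low-degree polynomials over large fields).**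
There exist absolute constants `C, C' > 0` such that for all integers `n ≥ 2`, `d ≥ 1`,
every `ε > 0`, and every finite field `F` (of size `q = Fintype.card F`, a prime power)
with characteristic at least `d(d−1)+1` and `q ≥ C·(d·2^d/ε + d^4/ε^2)`, there exist a
nonempty finite set `S` with `log₂ |S| ≤ C'·(d·log₂ n + log₂ q)` and a map
`G : S → F^(n+1)` such that for every polynomial `f ∈ F[x₁,…,xₙ,y]` of total degree at
most `d`, the statistical distance between `f(U_{F^{n+1}})` and `f(G(U_S))` is at most `ε`. -/
theorem prg_for_low_degree_polynomials :
    ∃ C C' : ℝ, 0 < C ∧ 0 < C' ∧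
      ∀ (n d : ℕ), 2 ≤ n → 1 ≤ d →
      ∀ ε : ℝ, 0 < ε →
      ∀ (F : Type) [Field F] [Fintype F],
        (d * (d - 1) + 1 ≤ ringChar F) →
        (C * ((d : ℝ) * 2 ^ d / ε + (d : ℝ) ^ 4 / ε ^ 2) ≤ (Fintype.card F : ℝ)) →
        ∃ (S : Type) (_ : Finite S) (_ : Nonempty S) (G : S → (Fin (n + 1) → F)),
          Real.logb 2 (Nat.card S) ≤
            C' * ((d : ℝ) * Real.logb 2 n + Real.logb 2 (Fintype.card F)) ∧
          ∀ f : MvPolynomial (Fin (n + 1)) F, f.totalDegree ≤ d →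
            (1 / 2 : ℝ) * ∑ a : F,
              |(Nat.card {x : Fin (n + 1) → F // eval x f = a} : ℝ) /
                  (Fintype.card F : ℝ) ^ (n + 1)
                - (Nat.card {s : S // eval (G s) f = a} : ℝ) / (Nat.card S : ℝ)| ≤ ε := by
  refine ⟨4, 5, by norm_num, by norm_num, fun n d hn hd ε hε F _ _ _ hq => ?_⟩
  classical
  have hV : (Fintype.card F : ℝ) ^ (n + 1) = Nat.card (Fin (n + 1) → F) := by
    simp
  simp only [hV]
  rcases le_or_gt 1 ε with hε1 | hε1
  · refine ⟨Unit, inferInstance, inferInstance, fun _ => 0, ?_,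
      fun f _ => (statDist_le_one _ _).trans hε1⟩
    simp only [Nat.card_unique, Nat.cast_one, logb_one]
    have hlogn := logb_nonneg one_lt_two (by exact_mod_cast (by omega : 1 ≤ n) : (1 : ℝ) ≤ n)
    have hlogq := logb_nonneg one_lt_two
      (by exact_mod_cast Fintype.card_pos : (1 : ℝ) ≤ Fintype.card F)
    positivity
  set q := Fintype.card F
  have hq1 : (1 : ℝ) ≤ q := by exact_mod_cast Fintype.card_pos
  have hq0 : (0 : ℝ) < q := by linarith
  have hq2d := two_pow_add_two_le hε (hε1.le.trans (by exact_mod_cast hd)) hq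
  obtain ⟨ω, hω⟩ := exists_tuple_forall_statDist_comp_le
    (fun (p : {p : MvPolynomial (Fin (n + 1)) F // p.totalDegree ≤ d}) x => eval x p.1)
    (q ^ 4 * ((n + 2) ^ d + 1)) (t := ε / q) (by positivity)
    (div_le_of_le_mul₀ hq0.le zero_le_two (by linarith))
    (by
      refine lt_of_le_of_lt ?_ (two_mul_pow_succ_mul_exp_lt_one hq0 (four_le_mul_sq hε hd hq)
        ((n + 2) ^ d))
      gcongr
      · exact_mod_cast (natCard_subtype_totalDegree_le (σ := Fin (n + 1)) (R := F)).trans_eq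
          (by simp [q])
      · push_cast; rfl)
  refine ⟨Fin _, inferInstance, ⟨⟨0, by positivity⟩⟩, ω, ?_,
    fun f hf => (hω ⟨f, hf⟩).trans ?_⟩
  · simpa using logb_pow_four_mul_le hn (le_trans (pow_le_pow_right₀ one_le_two (by omega)) hq2d)
  · rw [mul_div_cancel₀ _ hq0.ne']
    linarith
end

section
/- Let d ≥ 1 and let F be a field whose characteristic is either zero or greater than d. Let f ∈ F[x_1,…,x_n,y] be a polynomial of total degree d that is monic in y with deg_y f = deg f = d (i.e., the coefficient of y^d in f is 1). Let c ∈ F be nonzero and let t be a new variable. Then f + c·t, regarded as a polynomial in F(t)[x_1,…,x_n,y], has total degree d and satisfies Hypothesis (H): it is monic in y with deg_y(f+ct) = deg(f+ct) = d, and Res( (f+ct)(0,…,0,y), (∂(f+ct)/∂y)(0,…,0,y) ) ≠ 0, where the resultant is taken of the two univariate polynomials in F(t)[y]. -/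
open MvPolynomial

/-- The Sylvester matrix of `f` and `g` with respect to degrees `d₁` and `d₂`: the
`(d₁+d₂) × (d₁+d₂)` matrix whose first `d₂` columns are the shifted coefficient vectors
of `f` and whose last `d₁` columns are the shifted coefficient vectors of `g`. -/
def sylvesterMatrix {R : Type*} [CommRing R] (d₁ d₂ : ℕ) (f g : Polynomial R) :
    Matrix (Fin (d₁ + d₂)) (Fin (d₁ + d₂)) R :=
  Matrix.of fun i j =>
    if (j : ℕ) < d₂ then
      (if (j : ℕ) ≤ (i : ℕ) then f.coeff ((i : ℕ) - (j : ℕ)) else 0)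
    else
      (if (j : ℕ) - d₂ ≤ (i : ℕ) then g.coeff ((i : ℕ) - ((j : ℕ) - d₂)) else 0)

/-- The resultant of two univariate polynomials `f` and `g`: the determinant of their
Sylvester matrix (taken with respect to their degrees). -/
noncomputable def resultant {R : Type*} [CommRing R] (f g : Polynomial R) : R :=
  (sylvesterMatrix f.natDegree g.natDegree f g).det

/-- The `K`-algebra map `F[x₁,…,xₙ,y] → F[y]` evaluating at `x₁ = ⋯ = xₙ = 0` (the
variable `y` is encoded as `none`, and `xᵢ` as `some i`), i.e. `f ↦ f(0,…,0,y)`. -/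
noncomputable def atZero {K : Type*} [CommSemiring K] {n : ℕ} :
    MvPolynomial (Option (Fin n)) K →ₐ[K] Polynomial K :=
  aeval fun v => v.elim Polynomial.X (fun _ => 0)

/-- `f ∈ K[x₁,…,xₙ,y]` satisfies **Hypothesis (H)** if (1) `f` is monic in `y` and
`deg_y f = deg f`, and (2) `Res(f(0,…,0,y), (∂f/∂y)(0,…,0,y)) ≠ 0`. -/
def SatisfiesHypH {K : Type*} [Field K] {n : ℕ}
    (f : MvPolynomial (Option (Fin n)) K) : Prop :=
  ((optionEquivLeft K (Fin n)) f).Monic ∧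
  ((optionEquivLeft K (Fin n)) f).natDegree = f.totalDegree ∧
  resultant (atZero f) (atZero ((pderiv none) f)) ≠ 0

/-! The leading form of `f + c·t` in `y` is that of `f`, so monicity and both degrees are unchanged.
For the resultant, put `P = f(0,…,0,y)`. Since `P` is monic of degree `d` and `d ≠ 0` in `F`, the
derivative `P'` is a nonzero polynomial over `F`. A common root `α` of `P + c·t` and `P'` in an
algebraic closure of `F(t)` would be algebraic over `F`, and then so would `t = -P(α)/c`. Hence
`P + c·t` and `P'` are coprime, and their resultant is nonzero. -/

theorem natCast_ne_zero_of_ringChar {R : Type*} [NonAssocSemiring R] {d : ℕ} (hd : d ≠ 0)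
    (hchar : ringChar R = 0 ∨ d < ringChar R) : (d : R) ≠ 0 := by
  rw [Ne, ringChar.spec]
  intro hdvd
  rcases hchar with h | h
  · exact hd (zero_dvd_iff.1 (h ▸ hdvd))
  · exact (Nat.le_of_dvd (Nat.pos_of_ne_zero hd) hdvd).not_gt h

namespace Polynomial

variable {R : Type*} [CommRing R] {p : R[X]}

theorem Monic.add_C (hp : p.Monic) (hdeg : p.natDegree ≠ 0) (a : R) : (p + C a).Monic := by
  unfold Monic
  rwa [Polynomial.leadingCoeff, natDegree_add_C, coeff_add, coeff_C_of_ne_zero hdeg, add_zero]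

theorem Monic.derivative_ne_zero (hp : p.Monic) (hdeg : (p.natDegree : R) ≠ 0) :
    derivative p ≠ 0 := by
  have hpos : p.natDegree - 1 + 1 = p.natDegree :=
    Nat.sub_add_cancel (Nat.pos_of_ne_zero (by rintro h; simp [h] at hdeg))
  intro h
  have := congrArg (coeff · (p.natDegree - 1)) h
  simp only [coeff_derivative, coeff_zero] at this
  rw [← Nat.cast_add_one, hpos, hp.coeff_natDegree, one_mul] at this
  exact hdeg this

theorem isCoprime_map_add_C_of_transcendental {F K : Type*} [Field F] [Field K] [Algebra F K]
    {t : K} (ht : Transcendental F t) (P : F[X]) {Q : F[X]} (hQ : Q ≠ 0) {c : F} (hc : c ≠ 0) :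
    IsCoprime (Q.map (algebraMap F K))
      (P.map (algebraMap F K) + C (algebraMap F K c * t)) := by
  rw [isCoprime_iff_aeval_ne_zero_of_isAlgClosed K (AlgebraicClosure K)]
  intro α
  by_contra! hα
  obtain ⟨hQα, hPα⟩ := hα
  rw [aeval_map_algebraMap] at hQα
  rw [map_add, aeval_map_algebraMap, aeval_C, map_mul,
    ← IsScalarTower.algebraMap_apply] at hPα
  have ht_eq : algebraMap K (AlgebraicClosure K) t = aeval α (-(C c⁻¹ * P)) := by
    have hc' : algebraMap F (AlgebraicClosure K) c ≠ 0 := by simpa using hc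
    rw [map_neg, map_mul, aeval_C, map_inv₀]
    field_simp
    linear_combination hPα
  have := (transcendental_algebraMap_iff (algebraMap K (AlgebraicClosure K)).injective).2 ht
  rw [ht_eq] at this
  exact (transcendental_aeval_iff.1 this).1 ⟨Q, hQ, hQα⟩

end Polynomial

-- Mathlib's Sylvester matrix puts the columns of its second argument first.
open Polynomial in
theorem resultant_eq_polynomial_resultant_swap {R : Type*} [CommRing R] (f g : R[X]) :
    _root_.resultant f g = Polynomial.resultant g f := by
  rw [_root_.resultant, Polynomial.resultant,
    ← Matrix.det_submatrix_equiv_self (finCongr (Nat.add_comm f.natDegree g.natDegree))]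
  congr 1
  ext i j
  obtain ⟨j, rfl⟩ := (finCongr (Nat.add_comm f.natDegree g.natDegree)).symm.surjective j
  induction j using Fin.addCases <;>
    simp only [sylvesterMatrix, sylvester, Matrix.of_apply, Matrix.submatrix_apply, finCongr_symm,
      finCongr_apply, Fin.cast_cast, Fin.cast_eq_self, Fin.cast_natAdd, Fin.cast_addNat,
      Fin.addCases_left, Fin.addCases_right, Fin.val_cast, Fin.val_castAdd,
      Fin.val_addNat, Nat.add_sub_cancel, Set.mem_Icc] <;>
    split_ifs <;> first | rfl | omega | exact coeff_eq_zero_of_natDegree_lt (by omega)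

namespace MvPolynomial

variable {R S σ : Type*} [CommSemiring R] [CommSemiring S]

theorem totalDegree_map_of_injective {φ : R →+* S} (hφ : Function.Injective φ)
    (p : MvPolynomial σ R) : (map φ p).totalDegree = p.totalDegree := by
  simp only [totalDegree, support_map_of_injective p hφ]

theorem totalDegree_add_C {p : MvPolynomial σ R} (hp : 0 < p.totalDegree) (a : R) :
    (p + C a).totalDegree = p.totalDegree :=
  totalDegree_add_eq_left_of_totalDegree_lt (by rwa [totalDegree_C])

theorem optionEquivLeft_map (φ : R →+* S) (p : MvPolynomial (Option σ) R) :
    optionEquivLeft S σ (map φ p) = (optionEquivLeft R σ p).map (map φ) := by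
  have : (optionEquivLeft S σ).toRingHom.comp (map φ)
      = (Polynomial.mapRingHom (map φ)).comp (optionEquivLeft R σ).toRingHom := by
    apply ringHom_ext
    · intro a
      simp [optionEquivLeft_C]
    · rintro (_ | i) <;> simp [optionEquivLeft_X_none, optionEquivLeft_X_some]
  exact DFunLike.congr_fun this p

variable {n : ℕ}

theorem atZero_eq_map_optionEquivLeft (p : MvPolynomial (Option (Fin n)) R) :
    atZero p = (optionEquivLeft R (Fin n) p).map (aeval fun _ => (0 : R)).toRingHom := by
  have : (atZero : MvPolynomial (Option (Fin n)) R →ₐ[R] Polynomial R)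
      = (Polynomial.mapAlgHom (aeval fun _ => (0 : R))).comp
        (optionEquivLeft R (Fin n)).toAlgHom := by
    apply algHom_ext
    rintro (_ | i) <;>
      simp [atZero, optionEquivLeft_X_none, optionEquivLeft_X_some, Polynomial.mapAlgHom]
  rw [this]
  rfl

theorem atZero_map (φ : R →+* S) (p : MvPolynomial (Option (Fin n)) R) :
    atZero (map φ p) = (atZero p).map φ := by
  have : (atZero : MvPolynomial (Option (Fin n)) S →ₐ[S] _).toRingHom.comp (map φ)
      = (Polynomial.mapRingHom φ).comp
        (atZero : MvPolynomial (Option (Fin n)) R →ₐ[R] _).toRingHom := by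
    apply ringHom_ext
    · intro a
      simp [atZero]
    · rintro (_ | i) <;> simp [atZero]
  exact DFunLike.congr_fun this p

theorem atZero_pderiv_none (p : MvPolynomial (Option (Fin n)) R) :
    atZero (pderiv none p) = Polynomial.derivative (atZero p) := by
  induction p using induction_on with
  | C a => simp [atZero]
  | add p q hp hq => simp [hp, hq]
  | mul_X p v hp =>
    cases v with
    | none =>
      rw [pderiv_mul, pderiv_X_self, map_add, map_mul, map_mul, hp]
      simp [atZero, Polynomial.derivative_mul]
    | some i =>
      rw [pderiv_mul, pderiv_X_of_ne (by simp), map_add, map_mul, map_mul, hp]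
      simp [atZero]

end MvPolynomial

/-- **Adding `c·t` produces a polynomial satisfying Hypothesis (H).**
Let `d ≥ 1` and let `F` be a field of characteristic zero or greater than `d`. Let
`f ∈ F[x₁,…,xₙ,y]` have total degree `d`, be monic in `y`, and satisfy
`deg_y f = deg f = d`. Let `c ∈ F` be nonzero and `t` a new variable. Then `f + c·t`,
viewed in `F(t)[x₁,…,xₙ,y]`, has total degree `d` and satisfies Hypothesis (H). -/
theorem add_ct_satisfies_hypothesis_H
    (F : Type) [Field F] (n d : ℕ) (hd : 1 ≤ d)
    (hchar : ringChar F = 0 ∨ d < ringChar F)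
    (f : MvPolynomial (Option (Fin n)) F)
    (hmonic : ((optionEquivLeft F (Fin n)) f).Monic)
    (hdegy : ((optionEquivLeft F (Fin n)) f).natDegree = d)
    (hdeg : f.totalDegree = d)
    (c : F) (hc : c ≠ 0) :
    (MvPolynomial.map (algebraMap F (RatFunc F)) f
        + MvPolynomial.C (RatFunc.C c * RatFunc.X)).totalDegree = d ∧
    SatisfiesHypH (MvPolynomial.map (algebraMap F (RatFunc F)) f
        + MvPolynomial.C (RatFunc.C c * RatFunc.X)) := by
  set φ := algebraMap F (RatFunc F)
  set s := RatFunc.C c * RatFunc.X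
  have hdF : (d : F) ≠ 0 := natCast_ne_zero_of_ringChar (by omega) hchar
  have hs : s = φ c * RatFunc.X := by simp only [s, φ, RatFunc.algebraMap_eq_C]
  have hy : optionEquivLeft _ (Fin n) (map φ f + C s)
      = (optionEquivLeft F (Fin n) f).map (map φ) + Polynomial.C (C s) := by
    rw [map_add, optionEquivLeft_map, optionEquivLeft_C]
  have hP : (atZero f).Monic := by
    rw [atZero_eq_map_optionEquivLeft]
    exact hmonic.map _
  have hPd : (atZero f).natDegree = d := by
    rw [atZero_eq_map_optionEquivLeft, hmonic.natDegree_map, hdegy]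
  have htot : (map φ f + C s).totalDegree = d := by
    rw [totalDegree_add_C, totalDegree_map_of_injective φ.injective, hdeg]
    rwa [totalDegree_map_of_injective φ.injective, hdeg]
  refine ⟨htot, ?_, ?_, ?_⟩
  · rw [hy]
    exact (hmonic.map _).add_C (by rw [hmonic.natDegree_map]; omega) _
  · rw [hy, Polynomial.natDegree_add_C, hmonic.natDegree_map, hdegy, htot]
  · have hC : atZero (C s : MvPolynomial (Option (Fin n)) (RatFunc F)) = Polynomial.C s := by
      simp [atZero]
    rw [map_add, map_add, pderiv_C, add_zero, pderiv_map, atZero_map, atZero_map,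
      atZero_pderiv_none, hC, resultant_eq_polynomial_resultant_swap, hs]
    exact Polynomial.resultant_ne_zero _ _ <| Polynomial.isCoprime_map_add_C_of_transcendental
      RatFunc.transcendental_X _ (hP.derivative_ne_zero (hPd ▸ hdF)) hc
end

section
/- Let K be a field, and let n ≥ 1 and d ≥ 1 be integers. Let λ_1,…,λ_d ∈ K[[x_1,…,x_n]] be formal power series. For each i ∈ {1,…,d}, let μ_i ∈ K[z_1,…,z_n][[x]] be the power series obtained from λ_i by substituting z_j·x for x_j for each j = 1,…,n, let g_i = y − μ_i ∈ K[z_1,…,z_n][[x]][y], and let ĝ_i = ∏_{j≠i} g_j. Then for every i ∈ {1,…,d} and every (j,k) ∈ ℕ², the coefficient of x^j y^k in ĝ_i · (∂g_i/∂x) is a polynomial in K[z_1,…,z_n] of total degree at most j+1, and the coefficient of x^j y^k in ĝ_i · (∂g_i/∂y) is a polynomial in K[z_1,…,z_n] of total degree at most j. -/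
open MvPolynomial

/-- The power series in `K[z₁,…,zₙ][[x]]` obtained from a formal power series
`λ ∈ K[[x₁,…,xₙ]]` by substituting `zⱼ·x` for `xⱼ` for each `j`: the coefficient of
`x^m` is `∑_{|e| = m} (coeff of x^e in λ)·z^e ∈ K[z₁,…,zₙ]`. -/
noncomputable def substZX {K : Type*} [CommRing K] {n : ℕ}
    (lam : MvPowerSeries (Fin n) K) : PowerSeries (MvPolynomial (Fin n) K) :=
  PowerSeries.mk fun m =>
    ∑ e ∈ Finset.Nat.antidiagonalTuple n m,
      MvPolynomial.monomial (Finsupp.equivFunOnFinite.symm e)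
        (MvPowerSeries.coeff (Finsupp.equivFunOnFinite.symm e) lam)

/-- The formal partial derivative `∂/∂x` on `A[[x]][y]`, acting coefficientwise by the
formal derivative of power series. -/
noncomputable def pderivX {A : Type*} [CommRing A]
    (h : Polynomial (PowerSeries A)) : Polynomial (PowerSeries A) :=
  h.sum fun k c => Polynomial.monomial k (PowerSeries.derivativeFun c)

/-- The coefficient `[h, x^j y^k] ∈ A` of `x^j y^k` in `h ∈ A[[x]][y]`. -/
noncomputable def coeffXY {A : Type*} [CommRing A]
    (h : Polynomial (PowerSeries A)) (j k : ℕ) : A :=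
  PowerSeries.coeff j (h.coeff k)

/-!
The substitution `xⱼ ↦ zⱼ·x` turns a monomial of degree `m` in the `xⱼ` into `x^m` times a
monomial of degree `m` in the `zⱼ`, so every `μᵢ`, hence every `gᵢ` and every product `ĝᵢ`,
has its `x^j y^k`-coefficient of total degree at most `j`. This bound is multiplicative: the
series whose `x^j`-coefficients have total degree at most `j + s` form a filtration `F s` with
`F s · F t ⊆ F (s + t)`. Differentiating in `y` preserves `F s`, and differentiating in `x`
maps `F s` into `F (s + 1)`, since the `x^j`-coefficient of `∂f/∂x` is a multiple of the
`x^(j+1)`-coefficient of `f`.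
-/

namespace PowerSeries

variable (σ R : Type*) [CommRing R]

def totalDegreeFiltration (s : ℕ) : AddSubgroup (PowerSeries (MvPolynomial σ R)) where
  carrier := {f | ∀ j, (coeff j f).totalDegree ≤ j + s}
  zero_mem' j := by simp
  add_mem' {f g} hf hg j := by
    rw [map_add]
    exact (totalDegree_add _ _).trans (max_le (hf j) (hg j))
  neg_mem' {f} hf j := by
    rw [map_neg, totalDegree_neg]
    exact hf j

variable {σ R}

theorem one_mem_totalDegreeFiltration :
    (1 : PowerSeries (MvPolynomial σ R)) ∈ totalDegreeFiltration σ R 0 := by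
  intro j
  rw [coeff_one]
  split_ifs <;> simp

theorem mul_mem_totalDegreeFiltration {s t : ℕ} {f g : PowerSeries (MvPolynomial σ R)}
    (hf : f ∈ totalDegreeFiltration σ R s) (hg : g ∈ totalDegreeFiltration σ R t) :
    f * g ∈ totalDegreeFiltration σ R (s + t) := by
  intro j
  rw [coeff_mul]
  refine (totalDegree_finsetSum _ _).trans (Finset.sup_le fun p hp => ?_)
  have hj : p.1 + p.2 = j := Finset.HasAntidiagonal.mem_antidiagonal.mp hp
  calc (coeff p.1 f * coeff p.2 g).totalDegree
      ≤ (coeff p.1 f).totalDegree + (coeff p.2 g).totalDegree := totalDegree_mul _ _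
    _ ≤ (p.1 + s) + (p.2 + t) := add_le_add (hf p.1) (hg p.2)
    _ = j + (s + t) := by omega

theorem derivative_mem_totalDegreeFiltration {s : ℕ} {f : PowerSeries (MvPolynomial σ R)}
    (hf : f ∈ totalDegreeFiltration σ R s) :
    derivative _ f ∈ totalDegreeFiltration σ R (s + 1) := by
  intro j
  rw [coeff_derivative, ← Nat.cast_succ, mul_comm, ← nsmul_eq_mul]
  calc ((j + 1) • coeff (j + 1) f).totalDegree ≤ (coeff (j + 1) f).totalDegree :=
        totalDegree_smul_le _ _
    _ ≤ j + (s + 1) := by have := hf (j + 1); omega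

end PowerSeries

theorem substZX_mem_totalDegreeFiltration {K : Type*} [CommRing K] {n : ℕ}
    (lam : MvPowerSeries (Fin n) K) :
    substZX lam ∈ PowerSeries.totalDegreeFiltration (Fin n) K 0 := by
  intro j
  rw [substZX, PowerSeries.coeff_mk]
  refine (totalDegree_finsetSum _ _).trans (Finset.sup_le fun e he => ?_)
  refine (totalDegree_monomial_le _ _).trans ?_
  simp only [Finsupp.sum, Finsupp.coe_equivFunOnFinite_symm]
  calc ∑ x ∈ (Finsupp.equivFunOnFinite.symm e).support, e x
      ≤ ∑ x : Fin n, e x := Finset.sum_le_sum_of_subset (Finset.subset_univ _)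
    _ = j := Finset.Nat.mem_antidiagonalTuple.mp he

namespace Polynomial

variable (σ R : Type*) [CommRing R]

def totalDegreeFiltration (s : ℕ) :
    AddSubgroup (Polynomial (PowerSeries (MvPolynomial σ R))) where
  carrier := {p | ∀ k, p.coeff k ∈ PowerSeries.totalDegreeFiltration σ R s}
  zero_mem' k := by simp
  add_mem' {p q} hp hq k := by simpa using add_mem (hp k) (hq k)
  neg_mem' {p} hp k := by simpa using neg_mem (hp k)

variable {σ R}

theorem one_mem_totalDegreeFiltration :
    (1 : Polynomial (PowerSeries (MvPolynomial σ R))) ∈ totalDegreeFiltration σ R 0 := by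
  intro k
  rw [coeff_one]
  split_ifs
  exacts [PowerSeries.one_mem_totalDegreeFiltration, zero_mem _]

theorem mul_mem_totalDegreeFiltration {s t : ℕ}
    {p q : Polynomial (PowerSeries (MvPolynomial σ R))}
    (hp : p ∈ totalDegreeFiltration σ R s) (hq : q ∈ totalDegreeFiltration σ R t) :
    p * q ∈ totalDegreeFiltration σ R (s + t) := fun k => by
  rw [coeff_mul]
  exact sum_mem fun _ _ => PowerSeries.mul_mem_totalDegreeFiltration (hp _) (hq _)

theorem prod_mem_totalDegreeFiltration {ι : Type*} {I : Finset ι} {s : ι → ℕ}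
    {f : ι → Polynomial (PowerSeries (MvPolynomial σ R))}
    (hf : ∀ i ∈ I, f i ∈ totalDegreeFiltration σ R (s i)) :
    ∏ i ∈ I, f i ∈ totalDegreeFiltration σ R (∑ i ∈ I, s i) := by
  classical
  induction I using Finset.induction_on with
  | empty => simpa using one_mem_totalDegreeFiltration
  | insert a I ha ih =>
    rw [Finset.prod_insert ha, Finset.sum_insert ha]
    exact mul_mem_totalDegreeFiltration (hf a (Finset.mem_insert_self a I))
      (ih fun i hi => hf i (Finset.mem_insert_of_mem hi))

theorem derivative_mem_totalDegreeFiltration {s : ℕ}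
    {p : Polynomial (PowerSeries (MvPolynomial σ R))} (hp : p ∈ totalDegreeFiltration σ R s) :
    derivative p ∈ totalDegreeFiltration σ R s := fun k => by
  rw [coeff_derivative, ← Nat.cast_succ, mul_comm, ← nsmul_eq_mul]
  exact nsmul_mem (hp (k + 1)) _

theorem X_sub_C_mem_totalDegreeFiltration {f : PowerSeries (MvPolynomial σ R)}
    (hf : f ∈ PowerSeries.totalDegreeFiltration σ R 0) :
    X - C f ∈ totalDegreeFiltration σ R 0 := by
  refine sub_mem (fun k => ?_) (fun k => ?_)
  · rw [coeff_X]
    split_ifs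
    exacts [PowerSeries.one_mem_totalDegreeFiltration, zero_mem _]
  · rw [coeff_C]
    split_ifs
    exacts [hf, zero_mem _]

end Polynomial

theorem totalDegree_coeffXY_le_of_mem {σ R : Type*} [CommRing R] {s : ℕ}
    {p : Polynomial (PowerSeries (MvPolynomial σ R))}
    (hp : p ∈ Polynomial.totalDegreeFiltration σ R s) (j k : ℕ) :
    (coeffXY p j k).totalDegree ≤ j + s :=
  hp k j

theorem coeff_pderivX {A : Type*} [CommRing A] (h : Polynomial (PowerSeries A)) (k : ℕ) :
    (pderivX h).coeff k = PowerSeries.derivative A (h.coeff k) := by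
  rw [pderivX, Polynomial.sum_def, Polynomial.finsetSum_coeff]
  simp only [Polynomial.coeff_monomial]
  rw [Finset.sum_ite_eq']
  split_ifs with hk
  · rfl
  · rw [Polynomial.notMem_support_iff.mp hk, map_zero]

theorem pderivX_mem_totalDegreeFiltration {σ R : Type*} [CommRing R] {s : ℕ}
    {p : Polynomial (PowerSeries (MvPolynomial σ R))}
    (hp : p ∈ Polynomial.totalDegreeFiltration σ R s) :
    pderivX p ∈ Polynomial.totalDegreeFiltration σ R (s + 1) := fun k => by
  rw [coeff_pderivX]
  exact PowerSeries.derivative_mem_totalDegreeFiltration (hp k)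

theorem lecerf_system_degree_bounds_general
    (K : Type) [Field K] (n d : ℕ)
    (lam : Fin d → MvPowerSeries (Fin n) K)
    (g : Fin d → Polynomial (PowerSeries (MvPolynomial (Fin n) K)))
    (hg : ∀ i, g i = Polynomial.X - Polynomial.C (substZX (lam i)))
    (ghat : Fin d → Polynomial (PowerSeries (MvPolynomial (Fin n) K)))
    (hghat : ∀ i, ghat i = ∏ j ∈ Finset.univ.erase i, g j) :
    ∀ (i : Fin d) (j k : ℕ),
      (coeffXY (ghat i * pderivX (g i)) j k).totalDegree ≤ j + 1 ∧
      (coeffXY (ghat i * Polynomial.derivative (g i)) j k).totalDegree ≤ j := by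
  open Polynomial in
  intro i j k
  have hg_mem (l : Fin d) : g l ∈ totalDegreeFiltration (Fin n) K 0 := by
    rw [hg l]
    exact X_sub_C_mem_totalDegreeFiltration (substZX_mem_totalDegreeFiltration (lam l))
  have hghat_mem : ghat i ∈ totalDegreeFiltration (Fin n) K 0 := by
    simpa [hghat i] using prod_mem_totalDegreeFiltration fun l _ => hg_mem l
  have hx := mul_mem_totalDegreeFiltration hghat_mem
    (pderivX_mem_totalDegreeFiltration (hg_mem i))
  have hy := mul_mem_totalDegreeFiltration hghat_mem
    (derivative_mem_totalDegreeFiltration (hg_mem i))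
  exact ⟨totalDegree_coeffXY_le_of_mem hx j k, totalDegree_coeffXY_le_of_mem hy j k⟩

/-- **Degree bounds for the entries of Lecerf's linear system.**
Let `K` be a field, `n ≥ 1`, `d ≥ 1`, and let `λ₁,…,λ_d ∈ K[[x₁,…,xₙ]]` be formal power
series. For `i ∈ [d]` let `μᵢ ∈ K[z₁,…,zₙ][[x]]` be obtained from `λᵢ` by substituting
`zⱼ·x` for `xⱼ`, let `gᵢ = y − μᵢ ∈ K[z₁,…,zₙ][[x]][y]`, and let `ĝᵢ = ∏_{j≠i} gⱼ`.
Then for all `i ∈ [d]` and `(j,k) ∈ ℕ²`, the coefficient of `x^j y^k` in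
`ĝᵢ·(∂gᵢ/∂x)` is a polynomial in `K[z₁,…,zₙ]` of total degree at most `j+1`, and the
coefficient of `x^j y^k` in `ĝᵢ·(∂gᵢ/∂y)` has total degree at most `j`. -/
theorem lecerf_system_degree_bounds
    (K : Type) [Field K] (n d : ℕ) (hn : 1 ≤ n) (hd : 1 ≤ d)
    (lam : Fin d → MvPowerSeries (Fin n) K)
    (g : Fin d → Polynomial (PowerSeries (MvPolynomial (Fin n) K)))
    (hg : ∀ i, g i = Polynomial.X - Polynomial.C (substZX (lam i)))
    (ghat : Fin d → Polynomial (PowerSeries (MvPolynomial (Fin n) K)))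
    (hghat : ∀ i, ghat i = ∏ j ∈ Finset.univ.erase i, g j) :
    ∀ (i : Fin d) (j k : ℕ),
      (coeffXY (ghat i * pderivX (g i)) j k).totalDegree ≤ j + 1 ∧
      (coeffXY (ghat i * Polynomial.derivative (g i)) j k).totalDegree ≤ j :=
  lecerf_system_degree_bounds_general K n d lam g hg ghat hghat
end

section
/- Let d ≥ 1 and let F be a field whose characteristic is either zero or greater than d. Let ḡ ∈ F[y] be a monic polynomial of degree d, let c ∈ F be nonzero, and let t be a new variable. Consider h := Res( ḡ + c·t, ḡ′ ), the resultant in y over F(t) of the degree-d polynomial ḡ + c·t and the derivative ḡ′ = dḡ/dy (which has degree d−1). Then h lies in F[t] and has degree exactly d−1 as a polynomial in t; in particular h ≠ 0. Moreover, with the convention that the resultant is the determinant of the Sylvester matrix, the coefficient of t^{d−1} in h equals c^{d−1}·d^d. -/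
/-!
Read `F[X][X]` as `F[t][y]`. Over a splitting field of `h`, the resultant of `h` and any `f` of
degree at most `n` is `lc(h)^n ∏_{h(β)=0} f(β)`. For `h = ḡ′ = d ∏ (y - β)` and `f = ḡ + c t`
this is `d^d ∏_β (c t + ḡ(β))`, a product of `d - 1` linear polynomials in `t` with leading
coefficient `c`. `sylvesterMatrix` is `Polynomial.sylvester` with its two blocks of columns
exchanged, so `resultant f g` is Mathlib's `resultant g f`; that one is computed over `F[t]` and
then mapped to `F(t)`.
-/

open Polynomial hiding resultant

theorem sylvesterMatrix_eq_reindex_sylvester {R : Type*} [CommRing R] {f g : R[X]} {m n : ℕ}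
    (hf : f.natDegree ≤ m) (hg : g.natDegree ≤ n) :
    sylvesterMatrix m n f g =
      (sylvester g f n m).reindex (finCongr (add_comm n m)) (finCongr (add_comm n m)) := by
  ext i j
  obtain ⟨j, rfl⟩ := (finCongr (add_comm n m)).surjective j
  induction j using Fin.addCases with
  | left j =>
    simp only [sylvesterMatrix, sylvester, Matrix.reindex_apply, Matrix.submatrix_apply,
      Matrix.of_apply, finCongr_symm, finCongr_apply, Fin.cast_cast, Fin.cast_eq_self,
      Fin.addCases_left, Fin.val_cast, Fin.val_castAdd, Fin.val_fin_le, Fin.is_lt, ↓reduceIte,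
      Set.mem_Icc]
    grind [coeff_eq_zero_of_natDegree_lt]
  | right j =>
    simp only [sylvesterMatrix, sylvester, Matrix.reindex_apply, Matrix.submatrix_apply,
      Matrix.of_apply, finCongr_symm, finCongr_apply, Fin.cast_cast, Fin.cast_eq_self,
      Fin.addCases_right, Fin.val_cast, Fin.val_natAdd, Fin.val_fin_le, add_lt_iff_neg_left,
      not_lt_zero, ↓reduceIte, add_tsub_cancel_left, Set.mem_Icc]
    grind [coeff_eq_zero_of_natDegree_lt]

theorem resultant_eq_resultant_swap {R : Type*} [CommRing R] (f g : R[X]) :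
    resultant f g = Polynomial.resultant g f := by
  rw [resultant, sylvesterMatrix_eq_reindex_sylvester le_rfl le_rfl, Matrix.det_reindex_self]
  rfl

theorem natCast_ne_zero_of_ringChar_s13 {R : Type*} [NonAssocSemiring R] {n : ℕ} (hn : n ≠ 0)
    (h : ringChar R = 0 ∨ n < ringChar R) : (n : R) ≠ 0 := by
  rw [ne_eq, ringChar.spec]
  rcases h with h | h
  · simpa [h] using hn
  · exact fun hdvd => (Nat.le_of_dvd (Nat.pos_of_ne_zero hn) hdvd).not_gt h

namespace Polynomial.Monic

variable {R : Type*} [Semiring R] {p : R[X]}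

theorem coeff_derivative_natDegree_sub_one (hp : p.Monic) (hn : p.natDegree ≠ 0) :
    p.derivative.coeff (p.natDegree - 1) = p.natDegree := by
  rw [coeff_derivative, ← Nat.cast_add_one, Nat.sub_add_cancel (Nat.pos_of_ne_zero hn),
    hp.coeff_natDegree, one_mul]

theorem natDegree_derivative (hp : p.Monic) (h : (p.natDegree : R) ≠ 0) :
    p.derivative.natDegree = p.natDegree - 1 :=
  natDegree_eq_of_le_of_coeff_ne_zero (by simpa using natDegree_derivative_le p)
    (by rwa [hp.coeff_derivative_natDegree_sub_one (by rintro h0; simp [h0] at h)])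

theorem leadingCoeff_derivative (hp : p.Monic) (h : (p.natDegree : R) ≠ 0) :
    p.derivative.leadingCoeff = p.natDegree := by
  rw [Polynomial.leadingCoeff, hp.natDegree_derivative h,
    hp.coeff_derivative_natDegree_sub_one (by rintro h0; simp [h0] at h)]

end Polynomial.Monic

section LinearFactors

variable {R ι : Type*} [CommRing R] [IsDomain R] {c : R}

theorem natDegree_multiset_prod_C_mul_X_add_C (hc : c ≠ 0) (s : Multiset ι) (a : ι → R) :
    (s.map fun b => C c * X + C (a b)).prod.natDegree = Multiset.card s := by
  rw [natDegree_multiset_prod]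
  · simp [natDegree_add_C, natDegree_C_mul_X _ hc]
  · simp only [Multiset.mem_map, not_exists, not_and]
    exact fun b _ h => hc (by simpa using congrArg (coeff · 1) h)

theorem leadingCoeff_multiset_prod_C_mul_X_add_C (hc : c ≠ 0) (s : Multiset ι) (a : ι → R) :
    (s.map fun b => C c * X + C (a b)).prod.leadingCoeff = c ^ Multiset.card s := by
  rw [leadingCoeff_multiset_prod]
  simp [hc]

end LinearFactors

theorem resultant_map_C_add_C_mul_X_of_splits {R : Type*} [CommRing R] [IsDomain R] {h : R[X]}
    (hh : h.Splits) {f : R[X]} {n : ℕ} (hf : f.natDegree ≤ n) (c : R) :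
    (h.map C).resultant (f.map C + C (C c * X)) h.natDegree n =
      C (h.leadingCoeff ^ n) * (h.roots.map fun β => C c * X + C (f.eval β)).prod := by
  have hdeg : (f.map C + C (C c * X)).natDegree ≤ n := by
    rwa [natDegree_add_C, natDegree_map_eq_of_injective C_injective]
  rw [← natDegree_map_eq_of_injective C_injective h,
    resultant_eq_prod_eval _ _ _ hdeg (hh.map C), hh.roots_map_of_injective C_injective,
    leadingCoeff_map_of_injective C_injective, Multiset.map_map]
  simp [eval_map, add_comm]

theorem map_resultant_map_C_add_C_mul_X {R S : Type*} [CommRing R] [CommRing S] (i : R →+* S)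
    (h f : R[X]) (c : R) (m n : ℕ) :
    ((h.map C).resultant (f.map C + C (C c * X)) m n).map i =
      ((h.map i).map C).resultant ((f.map i).map C + C (C (i c) * X)) m n := by
  change mapRingHom i _ = _
  rw [← resultant_map_map]
  congr 1
  · rw [Polynomial.map_map, mapRingHom_comp_C, Polynomial.map_map]
  · rw [Polynomial.map_add, Polynomial.map_map, mapRingHom_comp_C, ← Polynomial.map_map]
    simp

section Field

variable {F : Type*} [Field F] {h f : F[X]} {n : ℕ} {c : F}

theorem map_splittingField_resultant_map_C_add_C_mul_X (hf : f.natDegree ≤ n) :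
    ((h.map C).resultant (f.map C + C (C c * X)) h.natDegree n).map
        (algebraMap F h.SplittingField) =
      C ((h.map (algebraMap F h.SplittingField)).leadingCoeff ^ n) *
        ((h.map (algebraMap F h.SplittingField)).roots.map fun β =>
          C (algebraMap F h.SplittingField c) * X +
            C ((f.map (algebraMap F h.SplittingField)).eval β)).prod := by
  rw [map_resultant_map_C_add_C_mul_X, ← natDegree_map (algebraMap F h.SplittingField) (p := h)]
  exact resultant_map_C_add_C_mul_X_of_splits (SplittingField.splits h)
    (natDegree_map_le.trans hf) _

theorem card_roots_map_splittingField (h : F[X]) :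
    Multiset.card (h.map (algebraMap F h.SplittingField)).roots = h.natDegree := by
  rw [← (SplittingField.splits h).natDegree_eq_card_roots, natDegree_map]

theorem natDegree_resultant_map_C_add_C_mul_X (hh : h ≠ 0) (hf : f.natDegree ≤ n) (hc : c ≠ 0) :
    ((h.map C).resultant (f.map C + C (C c * X)) h.natDegree n).natDegree = h.natDegree := by
  rw [← natDegree_map (algebraMap F h.SplittingField),
    map_splittingField_resultant_map_C_add_C_mul_X hf,
    natDegree_C_mul (pow_ne_zero _ (by simpa using hh)),
    natDegree_multiset_prod_C_mul_X_add_C (by simpa using hc), card_roots_map_splittingField]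

theorem leadingCoeff_resultant_map_C_add_C_mul_X (hf : f.natDegree ≤ n) (hc : c ≠ 0) :
    ((h.map C).resultant (f.map C + C (C c * X)) h.natDegree n).leadingCoeff =
      h.leadingCoeff ^ n * c ^ h.natDegree := by
  apply (algebraMap F h.SplittingField).injective
  rw [← leadingCoeff_map, map_splittingField_resultant_map_C_add_C_mul_X hf, leadingCoeff_mul,
    leadingCoeff_C, leadingCoeff_multiset_prod_C_mul_X_add_C (by simpa using hc),
    card_roots_map_splittingField, leadingCoeff_map, map_mul, map_pow, map_pow]

theorem algebraMap_resultant_map_C_add_C_mul_X (h f : F[X]) (c : F) :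
    algebraMap F[X] (RatFunc F)
        ((h.map C).resultant (f.map C + C (C c * X)) h.natDegree f.natDegree) =
      resultant (f.map (algebraMap F (RatFunc F)) + C (RatFunc.C c * RatFunc.X))
        (h.map (algebraMap F (RatFunc F))) := by
  have hφ := IsFractionRing.injective F[X] (RatFunc F)
  have hφC : (algebraMap F[X] (RatFunc F)).comp C = algebraMap F (RatFunc F) := by
    rw [← Polynomial.algebraMap_eq, ← IsScalarTower.algebraMap_eq]
  have hf : f.map (algebraMap F (RatFunc F)) + C (RatFunc.C c * RatFunc.X) =
      (f.map C + C (C c * X)).map (algebraMap F[X] (RatFunc F)) := by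
    rw [Polynomial.map_add, Polynomial.map_map, hφC, map_C,
      map_mul (algebraMap F[X] (RatFunc F)), RatFunc.algebraMap_C, RatFunc.algebraMap_X]
  have hh : h.map (algebraMap F (RatFunc F)) = (h.map C).map (algebraMap F[X] (RatFunc F)) := by
    rw [Polynomial.map_map, hφC]
  rw [resultant_eq_resultant_swap, hf, hh, resultant_map_map, natDegree_map_eq_of_injective hφ,
    natDegree_map_eq_of_injective hφ, natDegree_add_C, natDegree_map_eq_of_injective C_injective,
    natDegree_map_eq_of_injective C_injective]

end Field

/-- **The resultant `Res(ḡ + c·t, ḡ′)` is a polynomial of degree `d−1` in `t` with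
leading coefficient `c^(d−1)·d^d`.**
Let `d ≥ 1` and let `F` be a field of characteristic zero or greater than `d`. Let
`ḡ ∈ F[y]` be monic of degree `d` and let `c ∈ F` be nonzero. Then the resultant in `y`
over `F(t)` of `ḡ + c·t` and the derivative `ḡ′` lies in `F[t]`, has degree exactly
`d−1` in `t` (in particular it is nonzero), and its coefficient of `t^(d−1)` is
`c^(d−1)·d^d`. -/
theorem resultant_add_ct_ne_zero
    (F : Type) [Field F] (d : ℕ) (hd : 1 ≤ d)
    (hchar : ringChar F = 0 ∨ d < ringChar F)
    (g : Polynomial F) (hmonic : g.Monic) (hdeg : g.natDegree = d)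
    (c : F) (hc : c ≠ 0) :
    ∃ P : Polynomial F,
      algebraMap (Polynomial F) (RatFunc F) P
        = resultant
            (g.map (algebraMap F (RatFunc F))
              + Polynomial.C (RatFunc.C c * RatFunc.X))
            ((Polynomial.derivative g).map (algebraMap F (RatFunc F))) ∧
      P.degree = ((d - 1 : ℕ) : WithBot ℕ) ∧
      P.coeff (d - 1) = c ^ (d - 1) * (d : F) ^ d ∧
      resultant
          (g.map (algebraMap F (RatFunc F))
            + Polynomial.C (RatFunc.C c * RatFunc.X))
          ((Polynomial.derivative g).map (algebraMap F (RatFunc F))) ≠ 0 := by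
  have hdF : (d : F) ≠ 0 := natCast_ne_zero_of_ringChar_s13 (by omega) hchar
  subst hdeg
  have hg'deg := hmonic.natDegree_derivative hdF
  have hg'lc := hmonic.leadingCoeff_derivative hdF
  have hg'0 : derivative g ≠ 0 := leadingCoeff_ne_zero.1 (hg'lc ▸ hdF)
  set P := ((derivative g).map C).resultant (g.map C + C (C c * X))
    (derivative g).natDegree g.natDegree
  have hPdeg : P.natDegree = g.natDegree - 1 :=
    hg'deg ▸ natDegree_resultant_map_C_add_C_mul_X hg'0 le_rfl hc
  have hPlc : P.leadingCoeff = c ^ (g.natDegree - 1) * (g.natDegree : F) ^ g.natDegree := by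
    rw [leadingCoeff_resultant_map_C_add_C_mul_X le_rfl hc, hg'lc, hg'deg, mul_comm]
  have hP0 : P ≠ 0 :=
    leadingCoeff_ne_zero.1 (hPlc ▸ mul_ne_zero (pow_ne_zero _ hc) (pow_ne_zero _ hdF))
  have hres := algebraMap_resultant_map_C_add_C_mul_X (derivative g) g c
  refine ⟨P, hres, ?_, ?_, ?_⟩
  · rw [degree_eq_natDegree hP0, hPdeg]
  · rw [← hPlc, leadingCoeff, hPdeg]
  · rw [← hres]
    exact (map_ne_zero_iff _ (IsFractionRing.injective F[X] (RatFunc F))).2 hP0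
end
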